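/- arXiv:2209.06651 — 4 statements merged into one kernel-verified Lean document; each statement's English description precedes it below -/
import Mathlib

section
/- Let d₁ ≠ d₂ and consider F(kₓ, k_y) = d₁|k|²k_y² + d₂|k|²kₓ² - b₁k_y² - b₂kₓ² + C/H₀ with |k|² = kₓ²+k_y² and d₁,d₂,b₁,b₂,H₀ > 0. If the point k_{m,n} = (m·√((b₁(d₁+d₂)-2b₂d₁)/(d₁-d₂)²), n·√((b₂(d₁+d₂)-2b₁d₂)/(d₁-d₂)²)) with m,n ∈ {−1,1} is real with both radicands positive, then the determinant of the Hessian of F at k_{m,n} equals −16·(b₁(d₁+d₂)−2b₂d₁)(b₂(d₁+d₂)−2b₁d₂)/(d₁−d₂)², which is negative; hence k_{m,n} is not a local minimum of F. -/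
/-- The factor of the constant Routh–Hurwitz coefficient in the anisotropic backscatter
rotating shallow water dispersion relation. -/
noncomputable def Fanis (d₁ d₂ b₁ b₂ C H₀ kx ky : ℝ) : ℝ :=
  d₁ * (kx^2 + ky^2) * ky^2 + d₂ * (kx^2 + ky^2) * kx^2 - b₁ * ky^2 - b₂ * kx^2 + C / H₀

lemma hasDerivAt_Fanis_x (d₁ d₂ b₁ b₂ C H₀ y x : ℝ) :
    HasDerivAt (fun x => Fanis d₁ d₂ b₁ b₂ C H₀ x y)
      (4*d₂*x^3 + (2*(d₁+d₂)*y^2 - 2*b₂)*x) x := by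
  have hx2 : HasDerivAt (fun x : ℝ => x^2) (2*x) x := by simpa using hasDerivAt_pow 2 x
  have h1 := ((hx2.add_const (y^2)).const_mul d₁).mul_const (y^2)
  have h2 := ((hx2.add_const (y^2)).const_mul d₂).mul hx2
  have h3 := hx2.const_mul b₂
  have H := (((h1.add h2).sub_const (b₁*y^2)).sub h3).add_const (C/H₀)
  have heq : 4*d₂*x^3 + (2*(d₁+d₂)*y^2 - 2*b₂)*x
      = d₁*(2*x)*y^2 + (d₂*(2*x)*x^2 + d₂*(x^2+y^2)*(2*x)) - b₂*(2*x) := by ring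
  rw [heq]
  exact H

lemma hasDerivAt_Fanis_y (d₁ d₂ b₁ b₂ C H₀ x y : ℝ) :
    HasDerivAt (fun y => Fanis d₁ d₂ b₁ b₂ C H₀ x y)
      (4*d₁*y^3 + (2*(d₁+d₂)*x^2 - 2*b₁)*y) y := by
  have hy2 : HasDerivAt (fun y : ℝ => y^2) (2*y) y := by simpa using hasDerivAt_pow 2 y
  have h1 := ((hy2.const_add (x^2)).const_mul d₁).mul hy2
  have h2 := ((hy2.const_add (x^2)).const_mul d₂).mul_const (x^2)
  have h3 := hy2.const_mul b₁
  have H := (((h1.add h2).sub h3).sub_const (b₂*x^2)).add_const (C/H₀)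
  have heq : 4*d₁*y^3 + (2*(d₁+d₂)*x^2 - 2*b₁)*y
      = (d₁*(2*y)*y^2 + d₁*(x^2+y^2)*(2*y) + d₂*(2*y)*x^2) - b₁*(2*y) := by ring
  rw [heq]
  exact H

lemma hasDerivAt_cubic (a c x : ℝ) :
    HasDerivAt (fun x : ℝ => 4*a*x^3 + c*x) (12*a*x^2 + c) x := by
  have h3 : HasDerivAt (fun x : ℝ => x^3) (3*x^2) x := by simpa using hasDerivAt_pow 3 x
  have H := (h3.const_mul (4*a)).add ((hasDerivAt_id x).const_mul c)
  have heq : 12*a*x^2 + c = 4*a*(3*x^2) + c*1 := by ring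
  rw [heq]
  exact H

lemma hasDerivAt_sq_affine (a b x : ℝ) :
    HasDerivAt (fun x : ℝ => a + b*x^2) (2*b*x) x := by
  have hx2 : HasDerivAt (fun x : ℝ => x^2) (2*x) x := by simpa using hasDerivAt_pow 2 x
  have H := (hx2.const_mul b).const_add a
  have heq : 2*b*x = b*(2*x) := by ring
  rw [heq]
  exact H

lemma not_min_aux (g : ℝ → ℝ) (a b c : ℝ) (ha : a < 0)
    (hg : ∀ t, g t = g 0 + a*t^2 + b*t^3 + c*t^4) : ¬ IsLocalMin g 0 := by
  intro h
  have hcont : Filter.Tendsto (fun t : ℝ => a + b*t + c*t^2) (nhds 0) (nhds a) := by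
    have hc : Continuous fun t : ℝ => a + b*t + c*t^2 := by continuity
    simpa using hc.tendsto 0
  have h1 : ∀ᶠ t in nhds (0:ℝ), a + b*t + c*t^2 < 0 :=
    hcont.eventually_lt_const ha
  have h2 : ∀ᶠ t in nhdsWithin (0:ℝ) {(0:ℝ)}ᶜ, g t < g 0 := by
    filter_upwards [nhdsWithin_le_nhds h1, self_mem_nhdsWithin] with t ht ht0
    have ht0' : t ≠ 0 := ht0
    have ht2 : 0 < t^2 := by positivity
    rw [hg t]
    nlinarith [mul_neg_of_pos_of_neg ht2 ht]
  have h3 : ∀ᶠ t in nhdsWithin (0:ℝ) {(0:ℝ)}ᶜ, g 0 ≤ g t :=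
    (h.filter_mono nhdsWithin_le_nhds)
  obtain ⟨t, ht1, ht2⟩ := (h2.and h3).exists
  linarith

/-- At the non-axial critical points `k_{m,n}` of `F`, the determinant of the Hessian equals
`-16 (b₁(d₁+d₂)-2b₂d₁)(b₂(d₁+d₂)-2b₁d₂)/(d₁-d₂)²`, which is negative whenever these points
are real; hence `k_{m,n}` is not a local minimum of `F`. -/
theorem hessian_det_at_nonaxial_critical_points (d₁ d₂ b₁ b₂ C H₀ : ℝ)
    (hd₁ : 0 < d₁) (hd₂ : 0 < d₂) (hb₁ : 0 < b₁) (hb₂ : 0 < b₂) (hH : 0 < H₀)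
    (hne : d₁ ≠ d₂)
    (hrx : 0 < (b₁ * (d₁ + d₂) - 2 * b₂ * d₁) / (d₁ - d₂)^2)
    (hry : 0 < (b₂ * (d₁ + d₂) - 2 * b₁ * d₂) / (d₁ - d₂)^2)
    (m n : ℝ) (hm : m = 1 ∨ m = -1) (hn : n = 1 ∨ n = -1) :
    let kx0 := m * Real.sqrt ((b₁ * (d₁ + d₂) - 2 * b₂ * d₁) / (d₁ - d₂)^2)
    let ky0 := n * Real.sqrt ((b₂ * (d₁ + d₂) - 2 * b₁ * d₂) / (d₁ - d₂)^2)
    let Fxx := deriv (deriv (fun x => Fanis d₁ d₂ b₁ b₂ C H₀ x ky0)) kx0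
    let Fyy := deriv (deriv (fun y => Fanis d₁ d₂ b₁ b₂ C H₀ kx0 y)) ky0
    let Fxy := deriv (fun x => deriv (fun y => Fanis d₁ d₂ b₁ b₂ C H₀ x y) ky0) kx0
    Fxx * Fyy - Fxy^2 =
      -16 * (b₁ * (d₁ + d₂) - 2 * b₂ * d₁) * (b₂ * (d₁ + d₂) - 2 * b₁ * d₂) / (d₁ - d₂)^2 ∧
    Fxx * Fyy - Fxy^2 < 0 ∧
    ¬ IsLocalMin (fun p : ℝ × ℝ => Fanis d₁ d₂ b₁ b₂ C H₀ p.1 p.2) (kx0, ky0) := by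
  intro kx0 ky0 Fxx Fyy Fxy
  have hd : d₁ - d₂ ≠ 0 := sub_ne_zero.mpr hne
  have he' : (0:ℝ) < (d₁ - d₂)^2 := by positivity
  have he : ((d₁ - d₂)^2 : ℝ) ≠ 0 := ne_of_gt he'
  have hA : 0 < b₁ * (d₁ + d₂) - 2 * b₂ * d₁ := by
    have h := mul_pos hrx he'
    rwa [div_mul_cancel₀ _ he] at h
  have hB : 0 < b₂ * (d₁ + d₂) - 2 * b₁ * d₂ := by
    have h := mul_pos hry he'
    rwa [div_mul_cancel₀ _ he] at h
  have hm2 : m^2 = 1 := by rcases hm with h | h <;> rw [h] <;> norm_num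
  have hn2 : n^2 = 1 := by rcases hn with h | h <;> rw [h] <;> norm_num
  have hX2 : kx0^2 = (b₁ * (d₁ + d₂) - 2 * b₂ * d₁) / (d₁ - d₂)^2 := by
    show (m * Real.sqrt _)^2 = _
    rw [mul_pow, hm2, Real.sq_sqrt hrx.le, one_mul]
  have hY2 : ky0^2 = (b₂ * (d₁ + d₂) - 2 * b₁ * d₂) / (d₁ - d₂)^2 := by
    show (n * Real.sqrt _)^2 = _
    rw [mul_pow, hn2, Real.sq_sqrt hry.le, one_mul]
  have hX2pos : 0 < kx0^2 := by rw [hX2]; exact hrx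
  have hY2pos : 0 < ky0^2 := by rw [hY2]; exact hry
  clear_value kx0 ky0
  -- critical point relations
  have hcx : 4*d₂*kx0^2 + 2*(d₁+d₂)*ky0^2 - 2*b₂ = 0 := by
    rw [hX2, hY2]; field_simp; ring
  have hcy : 4*d₁*ky0^2 + 2*(d₁+d₂)*kx0^2 - 2*b₁ = 0 := by
    rw [hX2, hY2]; field_simp; ring
  -- second derivatives
  have hFxx : Fxx = 8*d₂*kx0^2 := by
    show deriv (deriv (fun x => Fanis d₁ d₂ b₁ b₂ C H₀ x ky0)) kx0 = _
    have h1 : deriv (fun x => Fanis d₁ d₂ b₁ b₂ C H₀ x ky0)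
        = fun x => 4*d₂*x^3 + (2*(d₁+d₂)*ky0^2 - 2*b₂)*x :=
      funext fun x => (hasDerivAt_Fanis_x d₁ d₂ b₁ b₂ C H₀ ky0 x).deriv
    rw [h1, (hasDerivAt_cubic d₂ (2*(d₁+d₂)*ky0^2 - 2*b₂) kx0).deriv]
    linarith
  have hFyy : Fyy = 8*d₁*ky0^2 := by
    show deriv (deriv (fun y => Fanis d₁ d₂ b₁ b₂ C H₀ kx0 y)) ky0 = _
    have h1 : deriv (fun y => Fanis d₁ d₂ b₁ b₂ C H₀ kx0 y)
        = fun y => 4*d₁*y^3 + (2*(d₁+d₂)*kx0^2 - 2*b₁)*y :=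
      funext fun y => (hasDerivAt_Fanis_y d₁ d₂ b₁ b₂ C H₀ kx0 y).deriv
    rw [h1, (hasDerivAt_cubic d₁ (2*(d₁+d₂)*kx0^2 - 2*b₁) ky0).deriv]
    linarith
  have hFxy : Fxy = 4*(d₁+d₂)*kx0*ky0 := by
    show deriv (fun x => deriv (fun y => Fanis d₁ d₂ b₁ b₂ C H₀ x y) ky0) kx0 = _
    have h1 : (fun x => deriv (fun y => Fanis d₁ d₂ b₁ b₂ C H₀ x y) ky0)
        = fun x => (4*d₁*ky0^3 - 2*b₁*ky0) + (2*(d₁+d₂)*ky0)*x^2 := by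
      funext x
      rw [(hasDerivAt_Fanis_y d₁ d₂ b₁ b₂ C H₀ x ky0).deriv]
      ring
    rw [h1, (hasDerivAt_sq_affine (4*d₁*ky0^3 - 2*b₁*ky0) (2*(d₁+d₂)*ky0) kx0).deriv]
    ring
  -- determinant
  have hdet : Fxx * Fyy - Fxy^2 =
      -16 * (b₁ * (d₁ + d₂) - 2 * b₂ * d₁) * (b₂ * (d₁ + d₂) - 2 * b₁ * d₂) / (d₁ - d₂)^2 := by
    rw [hFxx, hFyy, hFxy]
    have h : 8*d₂*kx0^2 * (8*d₁*ky0^2) - (4*(d₁+d₂)*kx0*ky0)^2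
        = (64*d₁*d₂ - 16*(d₁+d₂)^2) * (kx0^2 * ky0^2) := by ring
    rw [h, hX2, hY2]
    field_simp
    ring
  have hneg : Fxx * Fyy - Fxy^2 < 0 := by
    have h16 : (0:ℝ) < 16 * (b₁ * (d₁ + d₂) - 2 * b₂ * d₁) * (b₂ * (d₁ + d₂) - 2 * b₁ * d₂)
        / (d₁ - d₂)^2 := by
      apply div_pos _ he'
      nlinarith [mul_pos hA hB]
    have heq : -16 * (b₁ * (d₁ + d₂) - 2 * b₂ * d₁) * (b₂ * (d₁ + d₂) - 2 * b₁ * d₂) / (d₁ - d₂)^2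
        = -(16 * (b₁ * (d₁ + d₂) - 2 * b₂ * d₁) * (b₂ * (d₁ + d₂) - 2 * b₁ * d₂) / (d₁ - d₂)^2) := by
      ring
    rw [hdet, heq]
    linarith
  refine ⟨hdet, hneg, ?_⟩
  clear_value Fxx Fyy Fxy
  intro hmin
  -- restrict F to the line through (kx0, ky0) with direction (u, v)
  have hφ : Filter.Tendsto (fun t : ℝ => (kx0 + (-(d₁+d₂)*ky0)*t, ky0 + (2*d₂*kx0)*t))
      (nhds 0) (nhds (kx0, ky0)) := by
    have hc : Continuous (fun t : ℝ => (kx0 + (-(d₁+d₂)*ky0)*t, ky0 + (2*d₂*kx0)*t)) := by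
      fun_prop
    have h := hc.tendsto 0
    simpa using h
  have hg0 : IsLocalMin
      (fun t : ℝ => Fanis d₁ d₂ b₁ b₂ C H₀ (kx0 + (-(d₁+d₂)*ky0)*t) (ky0 + (2*d₂*kx0)*t)) 0 := by
    have h := hφ.eventually hmin
    refine h.mono fun t ht => ?_
    simpa using ht
  have ha : -4*d₂*(d₁-d₂)^2*kx0^2*ky0^2 < 0 := by
    have hp := mul_pos (mul_pos (mul_pos (by linarith : (0:ℝ) < 4*d₂) he') hX2pos) hY2pos
    nlinarith [hp]
  refine not_min_aux _ (-4*d₂*(d₁-d₂)^2*kx0^2*ky0^2)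
      ((-8)*d₂^4*kx0^3*ky0 + 16*d₁*d₂^3*kx0^3*ky0 + (-8)*d₁^2*d₂^2*kx0^3*ky0)
      (d₂^5*ky0^4 + 4*d₂^5*kx0^2*ky0^2 + 4*d₁*d₂^4*ky0^4 + 12*d₁*d₂^4*kx0^2*ky0^2
        + 16*d₁*d₂^4*kx0^4 + 6*d₁^2*d₂^3*ky0^4 + 12*d₁^2*d₂^3*kx0^2*ky0^2
        + 4*d₁^3*d₂^2*ky0^4 + 4*d₁^3*d₂^2*kx0^2*ky0^2 + d₁^4*d₂*ky0^4)
      ha ?_ hg0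
  intro t
  simp only [Fanis]
  linear_combination ((-(d₁+d₂)*ky0)*kx0*t + (-(d₁+d₂)*ky0)^2*t^2/2) * hcx
    + ((2*d₂*kx0)*ky0*t + (2*d₂*kx0)^2*t^2/2) * hcy
end

section
/- With b₁,b₂,d₁,d₂,H₀ > 0 and b₂²d₁ ≥ b₁²d₂, the quantity C_c − C₀, where C_c = b₂²H₀/(4d₂) and C₀ = (b₁−b₂)(b₂d₁−b₁d₂)H₀/(d₁−d₂)², satisfies C_c − C₀ = (b₂(d₁+d₂) − 2b₁d₂)²H₀ / (4d₂(d₁−d₂)²) > 0, provided d₁ ≠ d₂ and b₁ ≠ b₂. In particular C₀ < C_c. -/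
/-- With `b₁,b₂,d₁,d₂,H₀ > 0`, `b₂²d₁ ≥ b₁²d₂`, `d₁ ≠ d₂` and `b₁ ≠ b₂`, the difference
`C_c − C₀ = (b₂(d₁+d₂) − 2b₁d₂)²H₀/(4d₂(d₁−d₂)²) > 0`; in particular `C₀ < C_c`. -/
theorem Cc_minus_C0 (b₁ b₂ d₁ d₂ H₀ : ℝ)
    (hb₁ : 0 < b₁) (hb₂ : 0 < b₂) (hd₁ : 0 < d₁) (hd₂ : 0 < d₂) (hH : 0 < H₀)
    (hord : b₂^2 * d₁ ≥ b₁^2 * d₂) (hd : d₁ ≠ d₂) (hb : b₁ ≠ b₂) :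
    b₂^2 * H₀ / (4 * d₂) - (b₁ - b₂) * (b₂ * d₁ - b₁ * d₂) * H₀ / (d₁ - d₂)^2 =
      (b₂ * (d₁ + d₂) - 2 * b₁ * d₂)^2 * H₀ / (4 * d₂ * (d₁ - d₂)^2) ∧
    0 < (b₂ * (d₁ + d₂) - 2 * b₁ * d₂)^2 * H₀ / (4 * d₂ * (d₁ - d₂)^2) ∧
    (b₁ - b₂) * (b₂ * d₁ - b₁ * d₂) * H₀ / (d₁ - d₂)^2 < b₂^2 * H₀ / (4 * d₂) := by
  have hdd : d₁ - d₂ ≠ 0 := sub_ne_zero.mpr hd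
  have hbd : b₁ - b₂ ≠ 0 := sub_ne_zero.mpr hb
  have hsq : (b₁ - b₂)^2 > 0 := by positivity
  have hN : 0 < b₂ * (d₁ + d₂) - 2 * b₁ * d₂ := by
    nlinarith [mul_pos hb₂ hd₂, sq_nonneg (b₁ - b₂)]
  have heq : b₂^2 * H₀ / (4 * d₂) - (b₁ - b₂) * (b₂ * d₁ - b₁ * d₂) * H₀ / (d₁ - d₂)^2 =
      (b₂ * (d₁ + d₂) - 2 * b₁ * d₂)^2 * H₀ / (4 * d₂ * (d₁ - d₂)^2) := by
    field_simp
    ring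
  have hpos : 0 < (b₂ * (d₁ + d₂) - 2 * b₁ * d₂)^2 * H₀ / (4 * d₂ * (d₁ - d₂)^2) := by
    positivity
  exact ⟨heq, hpos, by linarith [heq ▸ hpos]⟩
end

section
/- Let f, g, H₀, k_c > 0 and define h(χ) = √(f² + k_c² g H₀ cos(χ)²). Then I₂ := (1/(2π)) ∫₀^{2π} h(χ) cos(2χ) dχ > 0. -/
open Real

/-- Positivity of the coefficient
`I₂ = (1/(2π)) ∫₀^{2π} √(f² + k_c² g H₀ cos²χ) cos(2χ) dχ` arising in the bifurcation
equation for nonlinear inertia-gravity waves. -/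
theorem I2_positive (f g H₀ k_c : ℝ) (hf : 0 < f) (hg : 0 < g) (hH : 0 < H₀)
    (hk : 0 < k_c) :
    0 < (1 / (2 * π)) *
      ∫ χ in (0:ℝ)..(2 * π),
        Real.sqrt (f^2 + k_c^2 * g * H₀ * (Real.cos χ)^2) * Real.cos (2 * χ) := by
  have hpi : (0:ℝ) < π := Real.pi_pos
  set a := f^2 with ha
  set b := k_c^2 * g * H₀ with hb
  have ha0 : 0 < a := by positivity
  have hb0 : 0 < b := by positivity
  set F : ℝ → ℝ := fun χ => Real.sqrt (a + b * (Real.cos χ)^2) * Real.cos (2*χ) with hFdef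
  set G : ℝ → ℝ := fun χ => b * (Real.cos (2*χ))^2 /
      (Real.sqrt (a + b * (Real.cos χ)^2) + Real.sqrt (a + b * (Real.sin χ)^2)) with hGdef
  have hpos1 : ∀ χ : ℝ, (0:ℝ) < a + b * (Real.cos χ)^2 := fun χ => by positivity
  have hpos2 : ∀ χ : ℝ, (0:ℝ) < a + b * (Real.sin χ)^2 := fun χ => by positivity
  have hden : ∀ χ : ℝ, 0 < Real.sqrt (a + b * (Real.cos χ)^2)
      + Real.sqrt (a + b * (Real.sin χ)^2) := fun χ =>
    add_pos (Real.sqrt_pos.2 (hpos1 χ)) (Real.sqrt_pos.2 (hpos2 χ))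
  have hFcont : Continuous F := by
    apply Continuous.mul
    · exact (Real.continuous_sqrt.comp (by continuity))
    · exact Real.continuous_cos.comp (by continuity)
  have hGcont : Continuous G := by
    apply Continuous.div
    · exact (continuous_const.mul ((Real.continuous_cos.comp (by continuity)).pow 2))
    · exact (Real.continuous_sqrt.comp (by continuity)).add
        (Real.continuous_sqrt.comp (by continuity))
    · exact fun χ => ne_of_gt (hden χ)
  -- key pointwise identity
  have key : ∀ χ : ℝ, F χ + F (χ + π/2) = G χ := by
    intro χ
    have h1 : Real.cos (χ + π/2) = - Real.sin χ := Real.cos_add_pi_div_two χ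
    have h2 : Real.cos (2*(χ + π/2)) = - Real.cos (2*χ) := by
      have : 2*(χ + π/2) = 2*χ + π := by ring
      rw [this, Real.cos_add_pi]
    set s1 := Real.sqrt (a + b * (Real.cos χ)^2) with hs1def
    set s2 := Real.sqrt (a + b * (Real.sin χ)^2) with hs2def
    have hs1 : s1^2 = a + b * (Real.cos χ)^2 := Real.sq_sqrt (hpos1 χ).le
    have hs2 : s2^2 = a + b * (Real.sin χ)^2 := Real.sq_sqrt (hpos2 χ).le
    have hc : (Real.cos χ)^2 - (Real.sin χ)^2 = Real.cos (2*χ) := by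
      rw [Real.cos_two_mul]
      nlinarith [Real.sin_sq_add_cos_sq χ]
    have hFsum : F χ + F (χ + π/2) = (s1 - s2) * Real.cos (2*χ) := by
      simp only [hFdef, h1, h2, neg_sq]
      ring
    rw [hFsum, hGdef]
    rw [eq_div_iff (ne_of_gt (hden χ)), ← hs1def, ← hs2def]
    linear_combination Real.cos (2*χ) * hs1 - Real.cos (2*χ) * hs2
      + b * Real.cos (2*χ) * hc
  -- periodicity of F
  have hper : Function.Periodic F (2*π) := by
    intro χ
    simp only [hFdef]
    have e1 : Real.cos (χ + 2*π) = Real.cos χ := Real.cos_add_two_pi χ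
    have e2 : Real.cos (2*(χ + 2*π)) = Real.cos (2*χ) := by
      have : 2*(χ + 2*π) = (2*χ + 2*π) + 2*π := by ring
      rw [this, Real.cos_add_two_pi, Real.cos_add_two_pi]
    rw [e1, e2]
  have hint1 : IntervalIntegrable F MeasureTheory.volume 0 (2*π) :=
    hFcont.intervalIntegrable _ _
  have hFshiftcont : Continuous (fun χ => F (χ + π/2)) :=
    hFcont.comp (continuous_id.add continuous_const)
  have hint2 : IntervalIntegrable (fun χ => F (χ + π/2)) MeasureTheory.volume 0 (2*π) :=
    hFshiftcont.intervalIntegrable _ _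
  -- shift identity
  have hshift : (∫ χ in (0:ℝ)..(2*π), F (χ + π/2)) = ∫ χ in (0:ℝ)..(2*π), F χ := by
    rw [intervalIntegral.integral_comp_add_right]
    have e1 : (0:ℝ) + π/2 = π/2 := by ring
    have e2 : 2*π + π/2 = π/2 + 2*π := by ring
    rw [e1, e2, hper.intervalIntegral_add_eq (π/2) 0, zero_add]
  -- sum identity
  have hsum : (∫ χ in (0:ℝ)..(2*π), G χ) = 2 * ∫ χ in (0:ℝ)..(2*π), F χ := by
    have h1 : (∫ χ in (0:ℝ)..(2*π), (F χ + F (χ + π/2)))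
        = (∫ χ in (0:ℝ)..(2*π), F χ) + ∫ χ in (0:ℝ)..(2*π), F (χ + π/2) :=
      intervalIntegral.integral_add hint1 hint2
    have h2 : (∫ χ in (0:ℝ)..(2*π), G χ) = ∫ χ in (0:ℝ)..(2*π), (F χ + F (χ + π/2)) := by
      apply intervalIntegral.integral_congr
      intro χ _
      exact (key χ).symm
    rw [h2, h1, hshift]; ring
  -- G nonneg
  have hGnonneg : ∀ χ : ℝ, 0 ≤ G χ := by
    intro χ
    apply div_nonneg _ (hden χ).le
    positivity
  -- ∫ G > 0
  have hGpos : 0 < ∫ χ in (0:ℝ)..(2*π), G χ := by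
    have hsplit : (∫ χ in (0:ℝ)..(π/8), G χ) + (∫ χ in (π/8:ℝ)..(2*π), G χ)
        = ∫ χ in (0:ℝ)..(2*π), G χ :=
      intervalIntegral.integral_add_adjacent_intervals
        (hGcont.intervalIntegrable _ _) (hGcont.intervalIntegrable _ _)
    have hfirst : 0 < ∫ χ in (0:ℝ)..(π/8), G χ := by
      apply intervalIntegral.intervalIntegral_pos_of_pos_on
        (hGcont.intervalIntegrable _ _)
      · intro x hx
        have hx1 : 0 < x := hx.1
        have hx2 : x < π/8 := hx.2
        have hcos : 0 < Real.cos (2*x) := by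
          apply Real.cos_pos_of_mem_Ioo
          constructor <;> nlinarith
        apply div_pos _ (hden x)
        positivity
      · linarith
    have hsecond : 0 ≤ ∫ χ in (π/8:ℝ)..(2*π), G χ := by
      apply intervalIntegral.integral_nonneg
      · linarith
      · intro x _; exact hGnonneg x
    linarith
  have hI : 0 < ∫ χ in (0:ℝ)..(2*π), F χ := by linarith [hsum ▸ hGpos]
  have : (∫ χ in (0:ℝ)..(2 * π),
        Real.sqrt (f^2 + k_c^2 * g * H₀ * (Real.cos χ)^2) * Real.cos (2 * χ))
      = ∫ χ in (0:ℝ)..(2*π), F χ := by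
    apply intervalIntegral.integral_congr
    intro χ _
    simp only [hFdef, ha, hb]
  rw [this]
  have h2pi : 0 < 1 / (2*π) := by positivity
  exact mul_pos h2pi hI
end

section
/- For constants A, β ∈ ℝ, τ ∈ ℝ, wave vector k = (kₓ, k_y) ∈ ℝ², and k^⊥ = (−k_y, kₓ), the fields v(t,x) = A e^{βt} cos(k·x + τ) k^⊥ and η ≡ 0 solve the rotating shallow water equations ∂ₜv + (v·∇)v = −f v^⊥ − g∇η − B v − (C/H₀)v, ∂ₜη + (v·∇)η = −(H₀+η)∇·v, with B = diag(d₁Δ²+b₁Δ, d₂Δ²+b₂Δ), if and only if β = (b₁−d₁|k|²)k_y² + (b₂−d₂|k|²)kₓ² − C/H₀ and kₓk_y((d₁−d₂)|k|² + b₂−b₁) + f = 0. -/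
/-- Partial derivative in the first spatial coordinate. -/
noncomputable def pdx (u : ℝ × ℝ → ℝ) (p : ℝ × ℝ) : ℝ :=
  deriv (fun s => u (s, p.2)) p.1
/-- Partial derivative in the second spatial coordinate. -/
noncomputable def pdy (u : ℝ × ℝ → ℝ) (p : ℝ × ℝ) : ℝ :=
  deriv (fun s => u (p.1, s)) p.2
/-- Laplacian in two spatial dimensions. -/
noncomputable def lap (u : ℝ × ℝ → ℝ) (p : ℝ × ℝ) : ℝ :=
  pdx (pdx u) p + pdy (pdy u) p

section helpers
variable (a b kx ky τ : ℝ) (p : ℝ × ℝ)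

lemma hasDerivAt_linx : HasDerivAt (fun s : ℝ => kx * s + ky * p.2 + τ) kx p.1 :=
  by simpa using (((hasDerivAt_id p.1).const_mul kx).add_const (ky * p.2)).add_const τ

lemma hasDerivAt_liny : HasDerivAt (fun s : ℝ => kx * p.1 + ky * s + τ) ky p.2 := by
  have := (((hasDerivAt_id p.2).const_mul ky).add_const τ).const_add (kx * p.1)
  simpa [add_assoc] using this

lemma pdx_acb :
    pdx (fun q => a * Real.cos (kx * q.1 + ky * q.2 + τ) * b) p
      = a * Real.sin (kx * p.1 + ky * p.2 + τ) * (-(b * kx)) := by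
  have h := (((hasDerivAt_linx kx ky τ p).cos).const_mul a).mul_const b
  rw [pdx, h.deriv]; ring

lemma pdy_acb :
    pdy (fun q => a * Real.cos (kx * q.1 + ky * q.2 + τ) * b) p
      = a * Real.sin (kx * p.1 + ky * p.2 + τ) * (-(b * ky)) := by
  have h := (((hasDerivAt_liny kx ky τ p).cos).const_mul a).mul_const b
  rw [pdy, h.deriv]; ring

lemma pdx_asb :
    pdx (fun q => a * Real.sin (kx * q.1 + ky * q.2 + τ) * b) p
      = a * Real.cos (kx * p.1 + ky * p.2 + τ) * (b * kx) := by
  have h := (((hasDerivAt_linx kx ky τ p).sin).const_mul a).mul_const b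
  rw [pdx, h.deriv]; ring

lemma pdy_asb :
    pdy (fun q => a * Real.sin (kx * q.1 + ky * q.2 + τ) * b) p
      = a * Real.cos (kx * p.1 + ky * p.2 + τ) * (b * ky) := by
  have h := (((hasDerivAt_liny kx ky τ p).sin).const_mul a).mul_const b
  rw [pdy, h.deriv]; ring

lemma lap_acb :
    lap (fun q => a * Real.cos (kx * q.1 + ky * q.2 + τ) * b) p
      = a * Real.cos (kx * p.1 + ky * p.2 + τ) * (-(b * (kx ^ 2 + ky ^ 2))) := by
  rw [lap,
    show pdx (fun q => a * Real.cos (kx * q.1 + ky * q.2 + τ) * b)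
        = fun q => a * Real.sin (kx * q.1 + ky * q.2 + τ) * (-(b * kx)) from
      funext fun q => pdx_acb a b kx ky τ q,
    show pdy (fun q => a * Real.cos (kx * q.1 + ky * q.2 + τ) * b)
        = fun q => a * Real.sin (kx * q.1 + ky * q.2 + τ) * (-(b * ky)) from
      funext fun q => pdy_acb a b kx ky τ q,
    pdx_asb, pdy_asb]
  ring

lemma laplap_acb :
    lap (lap (fun q => a * Real.cos (kx * q.1 + ky * q.2 + τ) * b)) p
      = a * Real.cos (kx * p.1 + ky * p.2 + τ) * (b * (kx ^ 2 + ky ^ 2) ^ 2) := by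
  rw [show lap (fun q => a * Real.cos (kx * q.1 + ky * q.2 + τ) * b)
        = fun q => a * Real.cos (kx * q.1 + ky * q.2 + τ) * (-(b * (kx ^ 2 + ky ^ 2))) from
      funext fun q => lap_acb a b kx ky τ q,
    lap_acb]
  ring

lemma deriv_time (A β c b t : ℝ) :
    deriv (fun s => A * Real.exp (β * s) * c * b) t
      = A * Real.exp (β * t) * c * b * β := by
  have h1 : HasDerivAt (fun s : ℝ => β * s) β t := by simpa using (hasDerivAt_id t).const_mul β
  have h := ((h1.exp.const_mul A).mul_const c).mul_const b
  rw [h.deriv]; ring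

end helpers

/-- The fields `v = A e^{βt} cos(k·x + τ) k^⊥`, `η ≡ 0` solve the rotating shallow water
equations with anisotropic backscatter `B = diag(d₁Δ²+b₁Δ, d₂Δ²+b₂Δ)` and linear bottom
drag `(C/H₀)v` if and only if `β = (b₁−d₁|k|²)k_y² + (b₂−d₂|k|²)kₓ² − C/H₀` and
`kₓk_y((d₁−d₂)|k|² + b₂−b₁) + f = 0`. -/
theorem explicit_flow_existence_conditions
    (A β τ kx ky f g H₀ C d₁ d₂ b₁ b₂ : ℝ) (hA : A ≠ 0) (hk : ¬(kx = 0 ∧ ky = 0)) :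
    (let v1 : ℝ → ℝ × ℝ → ℝ :=
        fun t p => A * Real.exp (β * t) * Real.cos (kx * p.1 + ky * p.2 + τ) * (-ky)
     let v2 : ℝ → ℝ × ℝ → ℝ :=
        fun t p => A * Real.exp (β * t) * Real.cos (kx * p.1 + ky * p.2 + τ) * kx
     let η : ℝ → ℝ × ℝ → ℝ := fun _ _ => 0
     ∀ (t : ℝ) (p : ℝ × ℝ),
       (deriv (fun s => v1 s p) t + (v1 t p * pdx (v1 t) p + v2 t p * pdy (v1 t) p) =
          f * v2 t p - g * pdx (η t) p
            - (d₁ * lap (lap (v1 t)) p + b₁ * lap (v1 t) p) - (C / H₀) * v1 t p) ∧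
       (deriv (fun s => v2 s p) t + (v1 t p * pdx (v2 t) p + v2 t p * pdy (v2 t) p) =
          -(f * v1 t p) - g * pdy (η t) p
            - (d₂ * lap (lap (v2 t)) p + b₂ * lap (v2 t) p) - (C / H₀) * v2 t p) ∧
       (deriv (fun s => η s p) t + (v1 t p * pdx (η t) p + v2 t p * pdy (η t) p) =
          -(H₀ + η t p) * (pdx (v1 t) p + pdy (v2 t) p)))
    ↔ (β = (b₁ - d₁ * (kx^2 + ky^2)) * ky^2 + (b₂ - d₂ * (kx^2 + ky^2)) * kx^2 - C / H₀ ∧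
       kx * ky * ((d₁ - d₂) * (kx^2 + ky^2) + b₂ - b₁) + f = 0) := by
  have hK : kx ^ 2 + ky ^ 2 ≠ 0 := by
    rcases not_and_or.mp hk with h | h <;> positivity
  simp only []
  constructor
  · intro h
    -- pick a point where the phase is zero
    obtain ⟨p, hp⟩ : ∃ p : ℝ × ℝ, kx * p.1 + ky * p.2 + τ = 0 := by
      rcases not_and_or.mp hk with h0 | h0
      · exact ⟨(-τ / kx, 0), by field_simp; ring⟩
      · exact ⟨(0, -τ / ky), by field_simp; ring⟩
    obtain ⟨e1, e2, -⟩ := h 0 p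
    rw [deriv_time, pdx_acb, pdy_acb, lap_acb, laplap_acb, hp] at e1
    rw [deriv_time, pdx_acb, pdy_acb, lap_acb, laplap_acb, hp] at e2
    simp only [Real.cos_zero, Real.sin_zero, mul_zero, zero_mul, mul_one, Real.exp_zero,
      pdx, pdy, deriv_const'] at e1 e2
    constructor
    · refine mul_left_cancel₀ (mul_ne_zero hA hK) ?_
      linear_combination (-ky) * e1 + kx * e2
    · refine mul_left_cancel₀ (mul_ne_zero hA hK) ?_
      linear_combination (-kx) * e1 + (-ky) * e2
  · rintro ⟨hβ, hf⟩ t p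
    refine ⟨?_, ?_, ?_⟩
    · rw [deriv_time, pdx_acb, pdy_acb, lap_acb, laplap_acb]
      simp only [pdx, pdy, deriv_const']
      linear_combination (A * Real.exp (β * t) * Real.cos (kx * p.1 + ky * p.2 + τ) * (-ky)) * hβ +
        (-(A * Real.exp (β * t) * Real.cos (kx * p.1 + ky * p.2 + τ) * kx)) * hf
    · rw [deriv_time, pdx_acb, pdy_acb, lap_acb, laplap_acb]
      simp only [pdx, pdy, deriv_const']
      linear_combination (A * Real.exp (β * t) * Real.cos (kx * p.1 + ky * p.2 + τ) * kx) * hβ +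
        (-(A * Real.exp (β * t) * Real.cos (kx * p.1 + ky * p.2 + τ) * ky)) * hf
    · rw [pdx_acb, pdy_acb]
      simp only [pdx, pdy, deriv_const']
      ring
end
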